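/- arXiv:0709.4376 — 3 statements merged into one kernel-verified Lean document; each statement's English description precedes it below -/
import Mathlib

section
/- For a symmetric bilinear form B on an n-dimensional inner product space with eigenvalues λ₁,…,λ_n, the quantity (1/(k!(n−k)!))·⋆(g^{n−k}·B^k) equals the k-th elementary symmetric function e_k(λ₁,…,λ_n). -/
open scoped BigOperators RealInnerProductSpace

/-- A `(p,q)`-double form on `V` (function version). -/
abbrev DForm (V : Type*) (p q : ℕ) : Type _ := (Fin p → V) → (Fin q → V) → ℝ

/-- Wedge product of (alternating) `p`-forms, determinant convention. -/
noncomputable def wedgeF {V : Type*} {p q : ℕ} (α : (Fin p → V) → ℝ) (β : (Fin q → V) → ℝ) :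
    (Fin (p + q) → V) → ℝ := fun x =>
  (1 / (p.factorial * q.factorial : ℝ)) *
    ∑ σ : Equiv.Perm (Fin (p + q)),
      ((Equiv.Perm.sign σ : ℤ) : ℝ) *
        (α fun i => x (σ (Fin.castAdd q i))) * (β fun j => x (σ (Fin.natAdd p j)))

/-- Exterior (Kulkarni–Nomizu type) product of double forms. -/
noncomputable def dmul {V : Type*} {p q r s : ℕ} (ω : DForm V p q) (η : DForm V r s) :
    DForm V (p + r) (q + s) := fun x y =>
  (1 / (p.factorial * r.factorial * q.factorial * s.factorial : ℝ)) *
    ∑ σ : Equiv.Perm (Fin (p + r)), ∑ τ : Equiv.Perm (Fin (q + s)),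
      ((Equiv.Perm.sign σ : ℤ) : ℝ) * ((Equiv.Perm.sign τ : ℤ) : ℝ) *
        ω (fun i => x (σ (Fin.castAdd r i))) (fun j => y (τ (Fin.castAdd s j))) *
        η (fun i => x (σ (Fin.natAdd p i))) (fun j => y (τ (Fin.natAdd q j)))

/-- Reindexing a double form along equalities of the bidegree. -/
def castD {V : Type*} {p q p' q' : ℕ} (hp : p = p') (hq : q = q') (ω : DForm V p q) :
    DForm V p' q' := fun x y => ω (fun i => x (Fin.cast hp i)) (fun j => y (Fin.cast hq j))

/-- Tensor product of two forms, as a double form. -/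
def tmulD {V : Type*} {p q : ℕ} (α : (Fin p → V) → ℝ) (β : (Fin q → V) → ℝ) : DForm V p q :=
  fun x y => α x * β y

/-- Powers of a double form for the exterior product. -/
noncomputable def dpow {V : Type*} {a b : ℕ} (ω : DForm V a b) : (k : ℕ) → DForm V (a * k) (b * k)
  | 0 => fun _ _ => 1
  | k + 1 => dmul (dpow ω k) ω

/-- The metric, as a `(1,1)`-double form. -/
noncomputable def gmetric {V : Type*} [NormedAddCommGroup V] [InnerProductSpace ℝ V] :
    DForm V 1 1 := fun x y => (inner ℝ (x 0) (y 0) : ℝ)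

/-- A symmetric bilinear form as a `(1,1)`-double form. -/
def bilinD {V : Type*} [AddCommGroup V] [Module ℝ V] (B : V →ₗ[ℝ] V →ₗ[ℝ] ℝ) : DForm V 1 1 :=
  fun x y => B (x 0) (y 0)

/-- The scalar given by a `(0,0)`-double form. -/
def toScalar {V : Type*} (ω : DForm V 0 0) : ℝ := ω Fin.elim0 Fin.elim0

/-- Ricci contraction of a double form with respect to an orthonormal basis. -/
noncomputable def cD {V : Type*} [NormedAddCommGroup V] [InnerProductSpace ℝ V] {n : ℕ}
    (b : OrthonormalBasis (Fin n) ℝ V) {p q : ℕ} (ω : DForm V (p + 1) (q + 1)) : DForm V p q :=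
  fun x y => ∑ i : Fin n, ω (Fin.cons (b i) x) (Fin.cons (b i) y)

/-- Iterated Ricci contraction. -/
noncomputable def cIter {V : Type*} [NormedAddCommGroup V] [InnerProductSpace ℝ V] {n : ℕ}
    (b : OrthonormalBasis (Fin n) ℝ V) :
    ∀ (m : ℕ) {p q : ℕ}, DForm V (p + m) (q + m) → DForm V p q
  | 0, _, _, ω => ω
  | m + 1, _, _, ω => cIter b m (cD b ω)

/-- Symmetry of a `(p,p)`-double form. -/
def IsSymmD {V : Type*} {p : ℕ} (ω : DForm V p p) : Prop := ∀ x y, ω x y = ω y x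

/-- A double form is alternating in each group of arguments. -/
def IsAltD {V : Type*} {p q : ℕ} (ω : DForm V p q) : Prop :=
  (∀ (σ : Equiv.Perm (Fin p)) (x : Fin p → V) (y : Fin q → V),
      ω (x ∘ σ) y = ((Equiv.Perm.sign σ : ℤ) : ℝ) * ω x y) ∧
  (∀ (τ : Equiv.Perm (Fin q)) (x : Fin p → V) (y : Fin q → V),
      ω x (y ∘ τ) = ((Equiv.Perm.sign τ : ℤ) : ℝ) * ω x y)

/-- A double form is multilinear in each argument. -/
def IsMultilinearD {V : Type*} [AddCommGroup V] [Module ℝ V] {p q : ℕ}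
    (ω : DForm V p q) : Prop :=
  (∀ (x : Fin p → V) (i : Fin p) (u v : V) (c : ℝ) (y : Fin q → V),
      ω (Function.update x i (u + c • v)) y
        = ω (Function.update x i u) y + c * ω (Function.update x i v) y) ∧
  (∀ (x : Fin p → V) (y : Fin q → V) (j : Fin q) (u v : V) (c : ℝ),
      ω x (Function.update y j (u + c • v))
        = ω x (Function.update y j u) + c * ω x (Function.update y j v))

/-- The first Bianchi identity for a `(p,q)`-double form. -/
def FirstBianchiD {V : Type*} {p q : ℕ} (ω : DForm V p q) : Prop :=
  ∀ (x : Fin (p + 1) → V) (y : Fin q → V),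
    ∑ i : Fin (p + 1), ((-1 : ℝ) ^ (i : ℕ)) * ω (i.removeNth x) y = 0

/-- The volume form associated to an (oriented) orthonormal basis, extended by `0`
to tuples of the wrong length. -/
noncomputable def volA {V : Type*} [NormedAddCommGroup V] [InnerProductSpace ℝ V] {n : ℕ}
    (b : OrthonormalBasis (Fin n) ℝ V) {m : ℕ} (v : Fin m → V) : ℝ :=
  if h : m = n then
    Matrix.det (Matrix.of fun i j : Fin n => (inner ℝ (b i) (v (Fin.cast h.symm j)) : ℝ)) else 0

/-- Generalized Hodge star operator on double forms. -/
noncomputable def starD {V : Type*} [NormedAddCommGroup V] [InnerProductSpace ℝ V] {n : ℕ}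
    (b : OrthonormalBasis (Fin n) ℝ V) {p q : ℕ} (ω : DForm V p q) :
    DForm V (n - p) (n - q) := fun x y =>
  (1 / (p.factorial * q.factorial : ℝ)) *
    ∑ i : Fin p → Fin n, ∑ j : Fin q → Fin n,
      ω (fun a => b (i a)) (fun a => b (j a)) *
        volA b (Fin.append (fun a => b (i a)) x) * volA b (Fin.append (fun a => b (j a)) y)

/-- The scalar `⋆ω` of an `(n,n)`-double form. -/
noncomputable def starScalar {V : Type*} [NormedAddCommGroup V] [InnerProductSpace ℝ V] {n : ℕ}
    (b : OrthonormalBasis (Fin n) ℝ V) (ω : DForm V n n) : ℝ :=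
  toScalar (castD (Nat.sub_self n) (Nat.sub_self n) (starD b ω))

/-! The alternation `altD` turns the exterior product into the plain juxtaposition product:
`altD ω ∧ altD η = altD (ω ⊗ η)`. Hence `g^{n-k} B^k` is the alternation of
`g^{⊗(n-k)} ⊗ B^{⊗k}`. On an alternating `(n,n)`-form, `⋆` is evaluation on the basis, and
in a basis diagonalising `B` only the diagonal terms `σ = τ` of that alternation survive,
leaving `∑_σ λ_{σ(n-k+1)} ⋯ λ_{σ(n)}`. Every `k`-subset of indices is hit by exactly
`k! (n-k)!` permutations. -/

open Equiv Finset
open scoped Nat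

noncomputable section

def sgn {N : ℕ} (σ : Perm (Fin N)) : ℝ := ((Perm.sign σ : ℤ) : ℝ)

@[simp] lemma sgn_mul {N : ℕ} (σ τ : Perm (Fin N)) : sgn (σ * τ) = sgn σ * sgn τ := by
  simp [sgn]

@[simp] lemma sgn_mul_self {N : ℕ} (σ : Perm (Fin N)) : sgn σ * sgn σ = 1 := by
  rw [← sgn_mul]
  simp [sgn, Int.units_mul_self]

lemma sum_sgn_mul_comp_mul_left {N : ℕ} (π : Perm (Fin N)) (F : Perm (Fin N) → ℝ) :
    ∑ σ, sgn σ * F (π * σ) = sgn π * ∑ σ, sgn σ * F σ := by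
  conv_rhs => rw [← Equiv.sum_comp (Equiv.mulLeft π), Finset.mul_sum]
  refine Finset.sum_congr rfl fun σ _ => ?_
  simp only [coe_mulLeft, sgn_mul, ← mul_assoc, sgn_mul_self, one_mul]

def blockPerm {p r : ℕ} (σ : Perm (Fin p)) (τ : Perm (Fin r)) : Perm (Fin (p + r)) :=
  finSumFinEquiv.permCongr (σ.sumCongr τ)

@[simp] lemma blockPerm_castAdd {p r : ℕ} (σ : Perm (Fin p)) (τ : Perm (Fin r)) (i : Fin p) :
    blockPerm σ τ (Fin.castAdd r i) = Fin.castAdd r (σ i) := by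
  simp [blockPerm, permCongr_apply]

@[simp] lemma blockPerm_natAdd {p r : ℕ} (σ : Perm (Fin p)) (τ : Perm (Fin r)) (j : Fin r) :
    blockPerm σ τ (Fin.natAdd p j) = Fin.natAdd p (τ j) := by
  simp [blockPerm, permCongr_apply]

@[simp] lemma sgn_blockPerm {p r : ℕ} (σ : Perm (Fin p)) (τ : Perm (Fin r)) :
    sgn (blockPerm σ τ) = sgn σ * sgn τ := by
  simp [sgn, blockPerm, Perm.sign_permCongr, Perm.sign_sumCongr]

section DoubleForms

variable {V : Type*}

def altD {p q : ℕ} (ω : DForm V p q) : DForm V p q := fun x y =>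
  ∑ σ : Perm (Fin p), ∑ τ : Perm (Fin q), sgn σ * sgn τ * ω (x ∘ σ) (y ∘ τ)

def tensorD {p q r s : ℕ} (ω : DForm V p q) (η : DForm V r s) : DForm V (p + r) (q + s) :=
  fun x y => ω (fun i => x (Fin.castAdd r i)) (fun j => y (Fin.castAdd s j)) *
    η (fun i => x (Fin.natAdd p i)) (fun j => y (Fin.natAdd q j))

def tpowD {a b : ℕ} (ω : DForm V a b) : (k : ℕ) → DForm V (a * k) (b * k)
  | 0 => fun _ _ => 1
  | k + 1 => tensorD (tpowD ω k) ω

lemma isAltD_altD {p q : ℕ} (ω : DForm V p q) : IsAltD (altD ω) := by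
  constructor
  · intro π x y
    change _ = sgn π * _
    simp only [altD, mul_assoc, ← Finset.mul_sum]
    exact sum_sgn_mul_comp_mul_left π fun σ => ∑ τ, sgn τ * ω (x ∘ σ) (y ∘ τ)
  · intro π x y
    change _ = sgn π * _
    simp only [altD, mul_assoc, ← Finset.mul_sum]
    rw [Finset.mul_sum]
    refine Finset.sum_congr rfl fun σ _ => ?_
    rw [mul_left_comm]
    exact congrArg (sgn σ * ·) (sum_sgn_mul_comp_mul_left π fun τ => ω (x ∘ σ) (y ∘ τ))

lemma isAltD_castD {p q p' q' : ℕ} {hp : p = p'} {hq : q = q'} {ω : DForm V p q}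
    (hω : IsAltD ω) : IsAltD (castD hp hq ω) := by
  subst hp hq
  exact hω

lemma altD_eq_self_of_one_one (A : DForm V 1 1) : altD A = A := by
  funext x y
  simp [altD, sgn]

/-- Each choice of the `p! q! r! s!` inner permutations only reindexes the outer alternation
(as right multiplication by a block permutation), so their count cancels the normalisation of
`dmul`. -/
lemma dmul_altD_altD {p q r s : ℕ} (ω : DForm V p q) (η : DForm V r s) :
    dmul (altD ω) (altD η) = altD (tensorD ω η) := by
  funext x y
  set F : Perm (Fin (p + r)) → Perm (Fin (q + s)) → ℝ :=
    fun σ τ => sgn σ * sgn τ * tensorD ω η (x ∘ σ) (y ∘ τ) with hF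
  set P : Perm (Fin r) × Perm (Fin s) × Perm (Fin p) × Perm (Fin q) → Perm (Fin (p + r)) :=
    fun g => blockPerm g.2.2.1 g.1
  set Q : Perm (Fin r) × Perm (Fin s) × Perm (Fin p) × Perm (Fin q) → Perm (Fin (q + s)) :=
    fun g => blockPerm g.2.2.2 g.2.1
  have hexpand : ∀ σ τ, sgn σ * sgn τ *
      (altD ω (fun i => x (σ (Fin.castAdd r i))) (fun j => y (τ (Fin.castAdd s j))) *
        altD η (fun i => x (σ (Fin.natAdd p i))) (fun j => y (τ (Fin.natAdd q j))))
      = ∑ g, F (σ * P g) (τ * Q g) := by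
    intro σ τ
    simp only [altD, Finset.sum_mul, Finset.mul_sum, Fintype.sum_prod_type, hF, P, Q, tensorD,
      sgn_mul, sgn_blockPerm, Function.comp_def, Perm.coe_mul, blockPerm_castAdd,
      blockPerm_natAdd]
    refine sum_congr rfl fun _ _ => sum_congr rfl fun _ _ => sum_congr rfl fun _ _ =>
      sum_congr rfl fun _ _ => by ring
  have hreindex : ∀ g, ∑ σ, ∑ τ, F (σ * P g) (τ * Q g) = ∑ σ, ∑ τ, F σ τ := fun g =>
    (Equiv.sum_comp (Equiv.mulRight (P g)) fun σ => ∑ τ, F σ (τ * Q g)).trans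
      (sum_congr rfl fun σ _ => Equiv.sum_comp (Equiv.mulRight (Q g)) (F σ))
  calc dmul (altD ω) (altD η) x y
      = (1 / (p ! * r ! * q ! * s ! : ℝ)) * ∑ σ, ∑ τ, ∑ g, F (σ * P g) (τ * Q g) := by
        simp only [dmul, ← hexpand, mul_assoc]
        rfl
    _ = (1 / (p ! * r ! * q ! * s ! : ℝ)) * ∑ g, ∑ σ, ∑ τ, F (σ * P g) (τ * Q g) := by
        rw [(sum_congr rfl fun σ _ => Finset.sum_comm).trans Finset.sum_comm]
    _ = altD (tensorD ω η) x y := by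
        rw [sum_congr rfl fun g _ => hreindex g]
        simp only [sum_const, card_univ, Fintype.card_prod, Fintype.card_perm,
          Fintype.card_fin, nsmul_eq_mul, altD, hF]
        push_cast
        field_simp

lemma dpow_eq_altD_tpowD (A : DForm V 1 1) (k : ℕ) : dpow A k = altD (tpowD A k) := by
  induction k with
  | zero =>
    funext x y
    simp [dpow, tpowD, altD, sgn]
  | succ k ih =>
    calc dpow A (k + 1) = dmul (altD (tpowD A k)) (altD A) := by
          rw [altD_eq_self_of_one_one, ← ih]
          rfl
      _ = altD (tpowD A (k + 1)) := dmul_altD_altD _ _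

lemma tpowD_apply (A : DForm V 1 1) (k : ℕ) (x y : Fin (1 * k) → V) :
    tpowD A k x y = ∏ i, A (fun _ => x i) (fun _ => y i) := by
  induction k with
  | zero => simp [tpowD]
  | succ k ih =>
    show tensorD (tpowD A k) A x y = ∏ i : Fin (1 * k + 1), _
    rw [tensorD, ih, Fin.prod_univ_castSucc]
    congr 1
    congr 1 <;> funext j <;> rw [Subsingleton.elim j 0] <;> rfl

lemma tpowD_apply_comp_of_diag {ι : Type*} [DecidableEq ι] {A : DForm V 1 1} {v : ι → V}
    {d : ι → ℝ} (hA : ∀ i j, A (fun _ => v i) (fun _ => v j) = if i = j then d i else 0) (k : ℕ)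
    (e f : Fin (1 * k) → ι) :
    tpowD A k (fun i => v (e i)) (fun i => v (f i)) = if e = f then ∏ i, d (e i) else 0 := by
  rw [tpowD_apply]
  simp only [hA]
  split_ifs with hef
  · subst hef
    simp
  · obtain ⟨i, hi⟩ := Function.ne_iff.mp hef
    exact prod_eq_zero (mem_univ i) (if_neg hi)

lemma tensorD_tpowD_apply_comp_of_diag {ι : Type*} [DecidableEq ι] {A C : DForm V 1 1}
    {v : ι → V} {a c : ι → ℝ}
    (hA : ∀ i j, A (fun _ => v i) (fun _ => v j) = if i = j then a i else 0)
    (hC : ∀ i j, C (fun _ => v i) (fun _ => v j) = if i = j then c i else 0) (m k : ℕ)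
    (e f : Fin (1 * m + 1 * k) → ι) :
    tensorD (tpowD A m) (tpowD C k) (fun i => v (e i)) (fun i => v (f i))
      = if e = f then (∏ i, a (e (Fin.castAdd _ i))) * ∏ j, c (e (Fin.natAdd _ j)) else 0 := by
  rw [tensorD, tpowD_apply_comp_of_diag hA, tpowD_apply_comp_of_diag hC]
  by_cases hef : e = f
  · simp [hef]
  · have : ¬ ((fun i => e (Fin.castAdd _ i)) = (fun i => f (Fin.castAdd _ i)) ∧
        (fun j => e (Fin.natAdd _ j)) = (fun j => f (Fin.natAdd _ j))) := by
      simpa [funext_iff, Fin.forall_fin_add] using hef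
    split_ifs <;> simp_all

lemma altD_apply_self_of_offDiag {p : ℕ} (ω : DForm V p p) (x : Fin p → V)
    (h : ∀ σ τ : Perm (Fin p), σ ≠ τ → ω (x ∘ σ) (x ∘ τ) = 0) :
    altD ω x x = ∑ σ : Perm (Fin p), ω (x ∘ σ) (x ∘ σ) := by
  simp only [altD]
  refine Finset.sum_congr rfl fun σ _ => ?_
  rw [Finset.sum_eq_single σ, sgn_mul_self, one_mul]
  · exact fun τ _ hτ => by rw [h σ τ (Ne.symm hτ), mul_zero]
  · simp

end DoubleForms

section Hodge

variable {V : Type*} [NormedAddCommGroup V] [InnerProductSpace ℝ V] {n : ℕ}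

lemma volA_append_basis (b : OrthonormalBasis (Fin n) ℝ V) (i : Fin n → Fin n)
    (x : Fin (n - n) → V) :
    volA b (Fin.append (fun a => b (i a)) x) =
      ∑ σ : Perm (Fin n), if ⇑σ = i then sgn σ else 0 := by
  rw [volA, dif_pos (by omega), Matrix.det_apply]
  refine Finset.sum_congr rfl fun σ _ => ?_
  have hentry : ∀ c, inner ℝ (b (σ c)) (Fin.append (fun a => b (i a)) x (Fin.cast (by omega) c))
      = if σ c = i c then (1 : ℝ) else 0 := fun c => by
    rw [show Fin.cast (by omega) c = Fin.castAdd (n - n) c from rfl, Fin.append_left]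
    exact (orthonormal_iff_ite.mp b.orthonormal) (σ c) (i c)
  simp only [Matrix.of_apply, hentry, prod_boole, mem_univ, true_implies]
  by_cases h : ⇑σ = i
  · simp [h, sgn, Units.smul_def]
  · have : ¬ ∀ c, σ c = i c := fun h' => h (funext h')
    simp [h, this]

lemma sum_mul_sum_ite_coe_eq (F : (Fin n → Fin n) → ℝ) :
    ∑ i, F i * ∑ σ : Perm (Fin n), (if ⇑σ = i then sgn σ else 0) =
      ∑ σ : Perm (Fin n), sgn σ * F σ := by
  simp only [Finset.mul_sum, mul_ite, mul_zero]
  rw [Finset.sum_comm]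
  simp [mul_comm]

lemma starScalar_eq_sum (b : OrthonormalBasis (Fin n) ℝ V) (ω : DForm V n n) :
    starScalar b ω = (1 / (n ! * n ! : ℝ)) *
      ∑ σ : Perm (Fin n), ∑ τ : Perm (Fin n), sgn σ * sgn τ * ω (⇑b ∘ σ) (⇑b ∘ τ) := by
  simp only [starScalar, toScalar, castD, starD, volA_append_basis]
  congr 1
  calc _ = ∑ i, (∑ j, ω (fun a => b (i a)) (fun a => b (j a)) *
          ∑ τ : Perm (Fin n), if ⇑τ = j then sgn τ else 0) *
        ∑ σ : Perm (Fin n), if ⇑σ = i then sgn σ else 0 := by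
        simp only [Finset.sum_mul]
        exact Finset.sum_congr rfl fun i _ => Finset.sum_congr rfl fun j _ => by ring
    _ = _ := by
        simp only [sum_mul_sum_ite_coe_eq]
        simp only [Finset.mul_sum, mul_assoc]
        rfl

lemma starScalar_of_isAltD (b : OrthonormalBasis (Fin n) ℝ V) {ω : DForm V n n}
    (hω : IsAltD ω) : starScalar b ω = ω b b := by
  have hperm : ∀ σ τ : Perm (Fin n), ω (⇑b ∘ σ) (⇑b ∘ τ) = sgn σ * sgn τ * ω b b :=
    fun σ τ => by
    rw [hω.1, hω.2, mul_assoc]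
    rfl
  have hsq : ∀ σ τ : Perm (Fin n), sgn σ * sgn τ * (sgn σ * sgn τ * ω b b) = ω b b :=
    fun σ τ => by
      calc _ = (sgn σ * sgn σ) * (sgn τ * sgn τ) * ω b b := by ring
        _ = ω b b := by simp
  simp only [starScalar_eq_sum, hperm, hsq, sum_const, card_univ, Fintype.card_perm,
    Fintype.card_fin, nsmul_eq_mul]
  field_simp

end Hodge

section Counting

variable {α : Type*} [DecidableEq α]

lemma exists_perm_map_eq {s t : Finset α} (h : #s = #t) :
    ∃ π : Perm α, s.map π.toEmbedding = t := by
  have := Set.powersetCard.isPretransitive (α := α) (n := #t)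
  obtain ⟨π, hπ⟩ := MulAction.exists_smul_eq (Perm α)
    (Set.powersetCard.ofCard h) (Set.powersetCard.ofCard rfl)
  refine ⟨π, ?_⟩
  simpa [Finset.smul_finset_def, Finset.map_eq_image] using congrArg Subtype.val hπ

variable [Fintype α]

lemma card_perm_map_eq_eq_card_stabilizer {s t : Finset α} (h : #s = #t) :
    #{μ : Perm α | s.map μ.toEmbedding = t} = #{μ : Perm α | s.map μ.toEmbedding = s} := by
  obtain ⟨π, rfl⟩ := exists_perm_map_eq h
  refine (card_equiv (Equiv.mulLeft π⁻¹) fun μ => ?_)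
  have : s.map μ.toEmbedding = (s.map (π⁻¹ * μ).toEmbedding).map π.toEmbedding := by
    rw [Finset.map_map]
    congr 1
    ext
    simp
  simp [this, Finset.map_inj]

/-- The `choose (card α) #s` fibres of `μ ↦ μ '' s` all have the same size and together
exhaust the `(card α)!` permutations. -/
lemma card_perm_map_eq {s t : Finset α} (h : #s = #t) :
    #{μ : Perm α | s.map μ.toEmbedding = t} = (#s)! * (Fintype.card α - #s)! := by
  have hmaps : ∀ μ ∈ (univ : Finset (Perm α)), s.map μ.toEmbedding ∈ powersetCard #s univ := by
    simp
  have htotal := card_eq_sum_card_fiberwise hmaps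
  rw [sum_congr rfl fun t' ht' => card_perm_map_eq_eq_card_stabilizer
      (mem_powersetCard.1 ht').2.symm, sum_const, card_powersetCard, card_univ,
    card_univ, Fintype.card_perm, smul_eq_mul] at htotal
  rw [card_perm_map_eq_eq_card_stabilizer h]
  refine Nat.eq_of_mul_eq_mul_left (Nat.choose_pos (card_le_univ s)) ?_
  rw [← htotal, ← mul_assoc, Nat.choose_mul_factorial_mul_factorial (card_le_univ s)]

lemma sum_perm_prod_apply_embedding (f : α → ℝ) {K : ℕ} (c : Fin K ↪ α) :
    ∑ μ : Perm α, ∏ j, f (μ (c j))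
      = K ! * (Fintype.card α - K)! * ∑ t ∈ powersetCard K univ, ∏ i ∈ t, f i := by
  set S := univ.map c
  have hS : #S = K := by simp [S]
  have hmaps : ∀ μ ∈ (univ : Finset (Perm α)), S.map μ.toEmbedding ∈ powersetCard K univ := by
    simp [hS]
  calc ∑ μ : Perm α, ∏ j, f (μ (c j))
      = ∑ μ : Perm α, ∏ i ∈ S.map μ.toEmbedding, f i := by simp [S, prod_map]
    _ = ∑ t ∈ powersetCard K univ, ∑ μ : Perm α with S.map μ.toEmbedding = t, ∏ i ∈ t, f i :=
        (sum_fiberwise_of_maps_to' hmaps fun t => ∏ i ∈ t, f i).symm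
    _ = ∑ t ∈ powersetCard K univ, K ! * (Fintype.card α - K)! * ∏ i ∈ t, f i := by
        refine sum_congr rfl fun t ht => ?_
        rw [sum_const, card_perm_map_eq (hS.trans (mem_powersetCard.1 ht).2.symm), hS,
          nsmul_eq_mul]
        push_cast
        ring
    _ = _ := (mul_sum _ _ _).symm

end Counting

end

/-- for a symmetric bilinear form `B` with eigenvalues `λ₁,…,λ_n`,
`(1/(k!(n−k)!))·⋆(g^{n−k}·B^k)` is the `k`-th elementary symmetric function
`e_k(λ₁,…,λ_n)`. -/
theorem gaussBonnet_stmt8 {V : Type*} [NormedAddCommGroup V] [InnerProductSpace ℝ V]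
    {n k : ℕ} (hk : k ≤ n) (b : OrthonormalBasis (Fin n) ℝ V)
    (B : V →ₗ[ℝ] V →ₗ[ℝ] ℝ) (lam : Fin n → ℝ)
    (hdiag : ∀ i j, B (b i) (b j) = if i = j then lam i else 0) :
    (1 / (k.factorial * (n - k).factorial : ℝ)) *
        starScalar b (castD (by omega) (by omega)
          (dmul (dpow (gmetric (V := V)) (n - k)) (dpow (bilinD B) k)))
      = ∑ t ∈ Finset.univ.powersetCard k, ∏ i ∈ t, lam i := by
  have h : 1 * (n - k) + 1 * k = n := by omega
  set v : Fin (1 * (n - k) + 1 * k) → V := fun i => b (Fin.cast h i)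
  have hgv : ∀ i j, gmetric (fun _ => v i) (fun _ => v j) = if i = j then (1 : ℝ) else 0 :=
    orthonormal_iff_ite.mp (b.orthonormal.comp _ (Fin.cast_injective h))
  have hBv : ∀ i j, bilinD B (fun _ => v i) (fun _ => v j) =
      if i = j then lam (Fin.cast h i) else 0 := by
    simp [bilinD, v, hdiag, Fin.cast_inj]
  have hJ := tensorD_tpowD_apply_comp_of_diag hgv hBv (n - k) k
  let c : Fin (1 * k) ↪ Fin n := (Fin.natAddEmb _).trans (finCongr h).toEmbedding
  have hreindex : ∑ σ : Perm (Fin (1 * (n - k) + 1 * k)),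
      ∏ j, lam (Fin.cast h (σ (Fin.natAdd _ j))) = ∑ μ : Perm (Fin n), ∏ j, lam (μ (c j)) := by
    rw [← Equiv.sum_comp (finCongr h).permCongr]
    simp [c, permCongr_apply]
  rw [dpow_eq_altD_tpowD, dpow_eq_altD_tpowD, dmul_altD_altD,
    starScalar_of_isAltD b (isAltD_castD (isAltD_altD _))]
  change _ * altD _ v v = _
  rw [altD_apply_self_of_offDiag _ _ fun σ τ hστ => by
    rw [Function.comp_def, Function.comp_def, hJ,
      if_neg fun he => hστ (Equiv.ext (congrFun he))]]
  simp only [Function.comp_def, hJ, if_pos, prod_const_one, one_mul]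
  rw [hreindex, sum_perm_prod_apply_embedding]
  simp only [one_mul, Fintype.card_fin]
  field_simp
end

section
/- The Ricci contraction and multiplication by g on double forms satisfy the commutation relation: for a (p,q)-double form ω on an n-dimensional space, c(g·ω) = g·(cω) + (n−p−q)ω, where c is the Ricci contraction and g· is exterior multiplication by the metric. -/
open scoped BigOperators RealInnerProductSpace

/-!
Expanding the product with the `(1,1)`-form `g` along its row and its column gives
`(g·ω)(x, y) = ∑ₖ ∑ₗ (-1)^(k+l) ⟪xₖ, yₗ⟫ ω(x̂ₖ, ŷₗ)`. Contracting puts a basis vector `eᵢ` in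
front of `x` and of `y` and sums over `i`. The terms with `k, l` both in `x, y` add up to
`g·(cω)`; the term with both indices on `eᵢ` is `∑ᵢ ⟪eᵢ, eᵢ⟫ ω = n ω`. In a mixed term, linearity
and `∑ᵢ ⟪eᵢ, v⟫ eᵢ = v` put `yₗ` back in front of `ŷₗ`, and sorting it into place costs the same
sign `(-1)^l` again; so each of the `q + 1` (resp. `p + 1`) mixed terms is `-ω`.
-/

open Equiv Equiv.Perm

lemma Fin.removeNth_succ_cons {α : Type*} {m : ℕ} (i : Fin (m + 1)) (a : α)
    (y : Fin (m + 1) → α) :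
    Fin.removeNth i.succ (Fin.cons a y : Fin (m + 2) → α) = Fin.cons a (i.removeNth y) := by
  funext j
  cases j using Fin.cases <;> simp [Fin.removeNth, Fin.succ_succAbove_succ]

lemma Fin.sum_sum_univ_succ {M : Type*} [AddCommMonoid M] {p q : ℕ}
    (T : Fin (p + 1) → Fin (q + 1) → M) :
    ∑ k, ∑ l, T k l
      = T 0 0 + ∑ l : Fin q, T 0 l.succ + ∑ k : Fin p, T k.succ 0
        + ∑ k : Fin p, ∑ l : Fin q, T k.succ l.succ := by
  simp only [Fin.sum_univ_succ, Finset.sum_add_distrib]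
  abel

lemma Finset.sum_sum_sum_comm {M ι κ μ : Type*} [AddCommMonoid M] (s : Finset ι) (t : Finset κ)
    (u : Finset μ) (f : ι → κ → μ → M) :
    ∑ i ∈ s, ∑ k ∈ t, ∑ l ∈ u, f i k l = ∑ k ∈ t, ∑ l ∈ u, ∑ i ∈ s, f i k l := by
  rw [Finset.sum_comm]
  exact Finset.sum_congr rfl fun _ _ => Finset.sum_comm

lemma sign_mul_sign_real {m : ℕ} (σ : Perm (Fin m)) :
    ((sign σ : ℤ) : ℝ) * ((sign σ : ℤ) : ℝ) = 1 := by
  rw [← Int.cast_mul, ← Units.val_mul, Int.units_mul_self, Units.val_one, Int.cast_one]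

lemma exists_eq_decomposeFin_symm_zero {m : ℕ} {τ : Perm (Fin (m + 1))} (hτ : τ 0 = 0) :
    ∃ ρ : Perm (Fin m), τ = decomposeFin.symm (0, ρ) := by
  obtain ⟨⟨k, ρ⟩, rfl⟩ := decomposeFin.symm.surjective τ
  rw [decomposeFin_symm_apply_zero] at hτ
  exact ⟨ρ, hτ ▸ rfl⟩

lemma sum_perm_apply_zero {M : Type*} [AddCommMonoid M] {m : ℕ} (G : Fin (m + 1) → M) :
    ∑ σ : Perm (Fin (m + 1)), G (σ 0) = m.factorial • ∑ k, G k := by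
  rw [← decomposeFin.symm.sum_comp, Fintype.sum_prod_type]
  simp [Finset.smul_sum, Fintype.card_perm]

lemma sum_perm_sum_perm_apply_zero {M : Type*} [AddCommMonoid M] {p q : ℕ}
    (G : Fin (p + 1) → Fin (q + 1) → M) :
    ∑ σ : Perm (Fin (p + 1)), ∑ τ : Perm (Fin (q + 1)), G (σ 0) (τ 0)
      = (p.factorial * q.factorial) • ∑ k, ∑ l, G k l := by
  rw [Finset.sum_congr rfl fun σ _ => sum_perm_apply_zero (G (σ 0)),
    sum_perm_apply_zero fun k => q.factorial • ∑ l, G k l]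
  simp only [Finset.smul_sum, mul_smul]

section Alternating

variable {V : Type*}

def IsAltFun {m : ℕ} (f : (Fin m → V) → ℝ) : Prop :=
  ∀ (σ : Perm (Fin m)) (x : Fin m → V), f (x ∘ σ) = ((sign σ : ℤ) : ℝ) * f x

lemma IsAltFun.sign_mul_apply_succ {m : ℕ} {f : (Fin m → V) → ℝ} (hf : IsAltFun f)
    (σ : Perm (Fin (m + 1))) (x : Fin (m + 1) → V) :
    ((sign σ : ℤ) : ℝ) * f (fun i => x (σ i.succ))
      = (-1) ^ (σ 0 : ℕ) * f ((σ 0).removeNth x) := by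
  set k := σ 0
  -- `σ` is the cycle `(k … 1 0)` after a permutation fixing `0`
  obtain ⟨ρ, hρ⟩ := exists_eq_decomposeFin_symm_zero (τ := σ.trans k.cycleRange)
    (by simp [k])
  have hσ : σ = k.cycleRange.symm * decomposeFin.symm (0, ρ) := by
    rw [← hρ]; ext i; simp
  have hx : (fun i => x (σ i.succ)) = k.removeNth x ∘ ρ := by
    funext i; simp [hσ, Fin.removeNth_apply]
  have hsign : ((sign σ : ℤ) : ℝ) = (-1) ^ (k : ℕ) * ((sign ρ : ℤ) : ℝ) := by
    simp [hσ, sign_symm]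
  rw [hx, hf, hsign, mul_assoc, ← mul_assoc _ _ (f _), sign_mul_sign_real, one_mul]

lemma IsAltFun.cons {m : ℕ} {f : (Fin (m + 1) → V) → ℝ} (hf : IsAltFun f) (v : V) :
    IsAltFun fun x : Fin m → V => f (Fin.cons v x) := by
  intro σ x
  have hcons : (Fin.cons v (x ∘ σ) : Fin (m + 1) → V)
      = Fin.cons v x ∘ decomposeFin.symm (0, σ) := by
    funext j
    cases j using Fin.cases <;> simp
  simp [hcons, hf _ (Fin.cons v x)]

variable {p q : ℕ}

lemma castD_dmul_apply_eq_sum_perm (η : DForm V 1 1) (ω : DForm V p q)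
    (x : Fin (p + 1) → V) (y : Fin (q + 1) → V) :
    castD (add_comm 1 p) (add_comm 1 q) (dmul η ω) x y
      = (1 / (p.factorial * q.factorial : ℝ)) *
          ∑ σ : Perm (Fin (p + 1)), ∑ τ : Perm (Fin (q + 1)),
            ((sign σ : ℤ) : ℝ) * ((sign τ : ℤ) : ℝ) *
              η (fun _ => x (σ 0)) (fun _ => y (τ 0)) *
              ω (fun i => x (σ i.succ)) (fun j => y (τ j.succ)) := by
  simp only [castD, dmul, Nat.factorial_one, Nat.cast_one, one_mul, mul_one]
  congr 1
  refine Fintype.sum_equiv (permCongr (finCongr (add_comm 1 p))) _ _ fun σ => ?_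
  refine Fintype.sum_equiv (permCongr (finCongr (add_comm 1 q))) _ _ fun τ => ?_
  simp only [sign_permCongr, permCongr_apply, finCongr_apply, finCongr_symm]
  congr 4 <;> funext i <;> congr 3 <;> ext <;> simp [Fin.val_eq_zero, add_comm]

lemma castD_dmul_apply (η : DForm V 1 1) {ω : DForm V p q} (hω : IsAltD ω)
    (x : Fin (p + 1) → V) (y : Fin (q + 1) → V) :
    castD (add_comm 1 p) (add_comm 1 q) (dmul η ω) x y
      = ∑ k : Fin (p + 1), ∑ l : Fin (q + 1),
          (-1) ^ (k : ℕ) * (-1) ^ (l : ℕ) * η (fun _ => x k) (fun _ => y l) *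
            ω (k.removeNth x) (l.removeNth y) := by
  have hterm : ∀ (σ : Perm (Fin (p + 1))) (τ : Perm (Fin (q + 1))),
      ((sign σ : ℤ) : ℝ) * ((sign τ : ℤ) : ℝ) *
          η (fun _ => x (σ 0)) (fun _ => y (τ 0)) *
          ω (fun i => x (σ i.succ)) (fun j => y (τ j.succ))
        = (-1) ^ (σ 0 : ℕ) * (-1) ^ (τ 0 : ℕ) * η (fun _ => x (σ 0)) (fun _ => y (τ 0)) *
          ω ((σ 0).removeNth x) ((τ 0).removeNth y) := by
    intro σ τ
    have hσ := IsAltFun.sign_mul_apply_succ (f := fun z => ω z ((τ 0).removeNth y))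
      (fun σ x => hω.1 σ x _) σ x
    have hτ := IsAltFun.sign_mul_apply_succ (f := ω fun i => x (σ i.succ))
      (fun τ y => hω.2 τ _ y) τ y
    linear_combination (η (fun _ => x (σ 0)) (fun _ => y (τ 0))) *
      (((sign σ : ℤ) : ℝ) * hτ + (-1) ^ (τ 0 : ℕ) * hσ)
  have hsum := sum_perm_sum_perm_apply_zero fun (k : Fin (p + 1)) (l : Fin (q + 1)) =>
    (-1) ^ (k : ℕ) * (-1) ^ (l : ℕ) * η (fun _ => x k) (fun _ => y l) *
      ω (k.removeNth x) (l.removeNth y)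
  simp only [castD_dmul_apply_eq_sum_perm, hterm, hsum, nsmul_eq_mul, Nat.cast_mul]
  field_simp

end Alternating

lemma isLinearMap_cons_of_update_zero {V : Type*} [AddCommGroup V] [Module ℝ V] {m : ℕ}
    {f : (Fin (m + 1) → V) → ℝ}
    (hf : ∀ (x : Fin (m + 1) → V) (u w : V) (c : ℝ),
      f (Function.update x 0 (u + c • w))
        = f (Function.update x 0 u) + c * f (Function.update x 0 w))
    (z : Fin m → V) : IsLinearMap ℝ fun v => f (Fin.cons v z) := by
  have hcons : ∀ (u w : V) (c : ℝ),
      f (Fin.cons (u + c • w) z) = f (Fin.cons u z) + c * f (Fin.cons w z) := by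
    simpa only [Fin.update_cons_zero] using hf (Fin.cons 0 z)
  have hzero : f (Fin.cons 0 z) = 0 := by
    simpa using hcons 0 0 1
  refine ⟨fun u w => by simpa using hcons u w 1, fun c w => ?_⟩
  simpa [hzero] using hcons 0 w c

section Contraction

variable {V : Type*} [NormedAddCommGroup V] [InnerProductSpace ℝ V] {n : ℕ}
  (b : OrthonormalBasis (Fin n) ℝ V)

lemma cD_isAltD {p q : ℕ} {ω : DForm V (p + 1) (q + 1)} (hω : IsAltD ω) :
    IsAltD (cD b ω) := by
  constructor
  · intro σ x y
    simp only [cD, Finset.mul_sum]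
    exact Finset.sum_congr rfl fun i _ =>
      IsAltFun.cons (f := (ω · _)) (fun σ x => hω.1 σ x _) (b i) σ x
  · intro τ x y
    simp only [cD, Finset.mul_sum]
    exact Finset.sum_congr rfl fun i _ =>
      IsAltFun.cons (f := ω _) (fun τ y => hω.2 τ _ y) (b i) τ y

lemma sum_inner_mul_apply (L : V →ₗ[ℝ] ℝ) (v : V) :
    ∑ i, ⟪b i, v⟫ * L (b i) = L v := by
  conv_rhs => rw [← b.sum_repr' v]
  simp only [map_sum, map_smul, smul_eq_mul]

lemma IsAltFun.sum_sum_inner_mul_cons_removeNth {m : ℕ} {f : (Fin (m + 1) → V) → ℝ}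
    (hf : IsAltFun f) (hlin : ∀ z, IsLinearMap ℝ fun v => f (Fin.cons v z))
    (y : Fin (m + 1) → V) :
    ∑ i, ∑ l : Fin (m + 1),
        (-1) ^ (l : ℕ) * ⟪b i, y l⟫ * f (Fin.cons (b i) (l.removeNth y))
      = (m + 1) * f y := by
  have hrow : ∀ l : Fin (m + 1),
      ∑ i, (-1) ^ (l : ℕ) * ⟪b i, y l⟫ * f (Fin.cons (b i) (l.removeNth y)) = f y := by
    intro l
    have hcycle : f (Fin.cons (y l) (l.removeNth y)) = (-1) ^ (l : ℕ) * f y := by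
      rw [Fin.cons_removeNth_eq_comp_cycleRange_symm, hf]
      simp [sign_symm]
    calc _ = (-1) ^ (l : ℕ) * ∑ i, ⟪b i, y l⟫ * f (Fin.cons (b i) (l.removeNth y)) := by
          simp only [Finset.mul_sum, mul_assoc]
      _ = (-1) ^ (l : ℕ) * f (Fin.cons (y l) (l.removeNth y)) := by
          congr 1
          exact sum_inner_mul_apply b (hlin _).mk' (y l)
      _ = f y := by
          rw [hcycle, ← mul_assoc, ← pow_add, Even.neg_one_pow ⟨_, rfl⟩, one_mul]
  rw [Finset.sum_comm]
  simp [hrow]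

end Contraction

theorem gaussBonnet_stmt11_general {V : Type*} [NormedAddCommGroup V] [InnerProductSpace ℝ V]
    {n : ℕ} (b : OrthonormalBasis (Fin n) ℝ V)
    {p q : ℕ} (ω : DForm V (p + 1) (q + 1)) (halt : IsAltD ω) (hml : IsMultilinearD ω) :
    cD b (castD (add_comm 1 (p + 1)) (add_comm 1 (q + 1)) (dmul (gmetric (V := V)) ω))
      = castD (add_comm 1 p) (add_comm 1 q) (dmul (gmetric (V := V)) (cD b ω))
        + (((n : ℝ) - (p + 1) - (q + 1)) • ω) := by
  funext x y
  rw [Pi.add_apply, Pi.add_apply, castD_dmul_apply _ (cD_isAltD b halt)]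
  conv_lhs =>
    simp only [cD, castD_dmul_apply _ halt, Fin.sum_sum_univ_succ (p := p + 1) (q := q + 1)]
  simp only [gmetric, Fin.cons_zero, Fin.cons_succ, Fin.removeNth_zero, Fin.tail_cons,
    Fin.removeNth_succ_cons, Fin.val_zero, Fin.val_succ, pow_zero, pow_succ,
    Finset.sum_add_distrib, one_mul, mul_one, mul_neg, neg_mul, neg_neg, Finset.sum_neg_distrib,
    real_inner_comm (b _) (x _), ← Finset.sum_mul]
  have hcorner : ∑ i, ⟪b i, b i⟫ = (n : ℝ) := by simp [b.norm_eq_one]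
  have hrow := IsAltFun.sum_sum_inner_mul_cons_removeNth b (f := ω x) (fun τ y => halt.2 τ x y)
    (isLinearMap_cons_of_update_zero fun y u w c => hml.2 x y 0 u w c) y
  have hcol := IsAltFun.sum_sum_inner_mul_cons_removeNth b (f := (ω · y))
    (fun σ x => halt.1 σ x y) (isLinearMap_cons_of_update_zero (f := (ω · y))
      fun x u w c => hml.1 x 0 u w c y) x
  rw [hcorner, hrow, hcol, Finset.sum_sum_sum_comm]
  simp only [cD, Finset.mul_sum, Pi.smul_apply, smul_eq_mul]
  ring

/-- commutation of the Ricci contraction with multiplication by the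
metric: `c(g·ω) = g·(cω) + (n−p−q)ω` for a `(p,q)`-double form `ω`
(stated here for `p = p'+1`, `q = q'+1`). -/
theorem gaussBonnet_stmt11 {V : Type*} [NormedAddCommGroup V] [InnerProductSpace ℝ V]
    {n : ℕ} (b : OrthonormalBasis (Fin n) ℝ V) (hdim : Module.finrank ℝ V = n)
    {p q : ℕ} (ω : DForm V (p + 1) (q + 1)) (halt : IsAltD ω) (hml : IsMultilinearD ω) :
    cD b (castD (add_comm 1 (p + 1)) (add_comm 1 (q + 1)) (dmul (gmetric (V := V)) ω))
      = castD (add_comm 1 p) (add_comm 1 q) (dmul (gmetric (V := V)) (cD b ω))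
        + (((n : ℝ) - (p + 1) - (q + 1)) • ω) :=
  gaussBonnet_stmt11_general b ω halt hml
end

section
/- The first-contracted Einstein–Lovelock tensor is trace-adjusted correctly: for T_{2k} = h_{2k}·g − (1/(2k−1)!)·c^{2k−1}R^k on an n-dimensional space, the full trace satisfies c(T_{2k}) = (n−2k)·h_{2k}. -/
open scoped BigOperators RealInnerProductSpace

/-!
Contraction is linear, the contraction of the metric is `n`, and contracting
`c^{2k-1}R^k` once more gives `c^{2k}R^k = (2k)! h_{2k}`; since `(2k)! = 2k (2k-1)!`
the trace is `n h_{2k} - 2k h_{2k}`. The only point needing an argument is that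
`cIter` contracts the leading slots first while the final `cD` contracts the slot left
over, which an induction on the number of contractions reconciles (`cD_cIter`).
-/

section CastD

variable {V : Type*}

theorem castD_sub {p q p' q' : ℕ} (hp : p = p') (hq : q = q') (ω η : DForm V p q) :
    castD hp hq (ω - η) = castD hp hq ω - castD hp hq η :=
  rfl

theorem castD_smul {p q p' q' : ℕ} (hp : p = p') (hq : q = q') (a : ℝ) (ω : DForm V p q) :
    castD hp hq (a • ω) = a • castD hp hq ω :=
  rfl

end CastD

section Contraction

variable {V : Type*} [NormedAddCommGroup V] [InnerProductSpace ℝ V] {n : ℕ}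
  (b : OrthonormalBasis (Fin n) ℝ V)

theorem cD_sub {p q : ℕ} (ω η : DForm V (p + 1) (q + 1)) :
    cD b (ω - η) = cD b ω - cD b η := by
  funext x y
  exact Finset.sum_sub_distrib ..

theorem cD_smul {p q : ℕ} (a : ℝ) (ω : DForm V (p + 1) (q + 1)) :
    cD b (a • ω) = a • cD b ω := by
  funext x y
  exact (Finset.mul_sum ..).symm

theorem toScalar_cD_gmetric (h : 1 = 0 + 1) :
    toScalar (cD b (castD h h (gmetric (V := V)))) = n := by
  simp [toScalar, cD, castD, gmetric]

theorem cD_castD_succ {p q p' q' : ℕ} (hp : p = p') (hq : q = q') (ω : DForm V (p + 1) (q + 1)) :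
    cD b (castD (congrArg (· + 1) hp) (congrArg (· + 1) hq) ω) = castD hp hq (cD b ω) := by
  subst hp hq
  rfl

theorem cD_cIter {p q : ℕ} (m : ℕ) (ω : DForm V (p + 1 + m) (q + 1 + m)) :
    cD b (cIter b m ω) =
      cIter b (m + 1) (castD (Nat.add_right_comm p 1 m) (Nat.add_right_comm q 1 m) ω) := by
  induction m with
  | zero => rfl
  | succ m ih =>
    calc cD b (cIter b (m + 1) ω) = cD b (cIter b m (cD b ω)) := rfl
      _ = cIter b (m + 1) (castD _ _ (cD b ω)) := ih _
      _ = cIter b (m + 1) (cD b (castD _ _ ω)) := by rw [cD_castD_succ]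
      _ = _ := rfl

theorem cD_castD_cIter_castD {a c p q p' q' m m' : ℕ} (ω : DForm V a c) (ha : a = p + m)
    (hc : c = q + m) (hp : p = p' + 1) (hq : q = q' + 1) (hm : m + 1 = m')
    (ha' : a = p' + m') (hc' : c = q' + m') :
    cD b (castD hp hq (cIter b m (castD ha hc ω))) = cIter b m' (castD ha' hc' ω) := by
  subst ha hc hp hq hm
  exact cD_cIter b m ω

end Contraction

/-- the Einstein–Lovelock tensor
`T_{2k} = h_{2k}·g − (1/(2k−1)!)·c^{2k−1}R^k` has full trace
`c(T_{2k}) = (n−2k)·h_{2k}`, where `h_{2k} = (1/(2k)!)·c^{2k}R^k`. -/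
theorem gaussBonnet_stmt13 {V : Type*} [NormedAddCommGroup V] [InnerProductSpace ℝ V]
    {n k : ℕ} (hk : 1 ≤ k) (b : OrthonormalBasis (Fin n) ℝ V)
    (R : DForm V 2 2)
    (h2k : ℝ)
    (hh : h2k = (1 / ((2 * k).factorial : ℝ)) *
        toScalar (cIter b (2 * k) (castD (by omega) (by omega) (dpow R k))))
    (T2k : DForm V 1 1)
    (hT : T2k = h2k • gmetric
        - (1 / ((2 * k - 1).factorial : ℝ)) •
            cIter b (2 * k - 1) (castD (by omega) (by omega) (dpow R k))) :
    toScalar (cD b (castD (by omega) (by omega) T2k)) = ((n : ℝ) - 2 * k) * h2k := by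
  have hfac : ((2 * k).factorial : ℝ) = 2 * k * (2 * k - 1).factorial := by
    rw [← Nat.mul_factorial_pred (by omega : 2 * k ≠ 0)]
    push_cast [Nat.cast_sub (by omega : 1 ≤ 2 * k)]
    ring
  subst hT
  rw [castD_sub, castD_smul, castD_smul, cD_sub, cD_smul, cD_smul,
    cD_castD_cIter_castD b _ _ _ _ _ (Nat.sub_add_cancel (by omega)) (by omega) (by omega)]
  change h2k * toScalar (cD b (castD _ _ gmetric)) - _ * toScalar (cIter b (2 * k) _) = _
  rw [toScalar_cD_gmetric, hh, hfac]
  field_simp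
end
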